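/- arXiv:1810.04830 — 3 statements merged into one kernel-verified Lean document; each statement's English description precedes it below -/
import Mathlib

section
/- The mean value A(n) = S(n)/2^n of the depth-n row of the Calkin–Wilf tree converges to 3/2 as n → ∞. -/
/-!
Flipping every bit of the path to a vertex inverts its label, and
`x / (x + 1) + x⁻¹ / (x⁻¹ + 1) = 1`, so the left children of the row-`n` vertices have labels
summing to `2 ^ n / 2`, while the right children sum to `S n + 2 ^ n`. Hence
`S (n + 1) = S n + 3 * 2 ^ n / 2`, so `S n = (3 * 2 ^ n - 1) / 2` and
`A n = 3 / 2 - (1 / 2) ^ n / 2`.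
-/

def cwNode : List Bool → ℚ
  | [] => 1
  | b :: l => let x := cwNode l; if b then x + 1 else x / (x + 1)

noncomputable def S (n : ℕ) : ℚ := ∑ f : Fin n → Bool, cwNode (List.ofFn f)

noncomputable def A (n : ℕ) : ℝ := (S n : ℝ) / 2 ^ n

lemma div_add_one_add_inv_div_inv_add_one {K : Type*} [Field K] {x : K} (hx : x ≠ 0)
    (hx1 : x + 1 ≠ 0) : x / (x + 1) + x⁻¹ / (x⁻¹ + 1) = 1 := by
  have hinv : x⁻¹ / (x⁻¹ + 1) = 1 / (x + 1) := by
    rw [← mul_div_mul_left _ _ hx, mul_add, mul_inv_cancel₀ hx, mul_one, add_comm]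
  rw [hinv, ← add_div, div_self hx1]

section SumOverPaths

variable {M : Type*} [AddCommMonoid M]

lemma sum_ofFn_succ (n : ℕ) (g : List Bool → M) :
    ∑ f : Fin (n + 1) → Bool, g (List.ofFn f)
      = ∑ f : Fin n → Bool, (g (true :: List.ofFn f) + g (false :: List.ofFn f)) := by
  rw [← Fintype.sum_equiv (Fin.consEquiv fun _ => Bool) (fun p => g (p.1 :: List.ofFn p.2))
    (fun f => g (List.ofFn f)) (fun p => by simp [List.ofFn_succ]), Fintype.sum_prod_type,
    Finset.sum_comm]
  simp only [Fintype.sum_bool]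

lemma sum_ofFn_map_not (n : ℕ) (g : List Bool → M) :
    ∑ f : Fin n → Bool, g ((List.ofFn f).map not) = ∑ f : Fin n → Bool, g (List.ofFn f) :=
  Fintype.sum_equiv (Equiv.piCongrRight fun _ => Equiv.boolNot) _ _
    (fun f => by rw [List.map_ofFn]; rfl)

end SumOverPaths

lemma cwNode_pos (l : List Bool) : 0 < cwNode l := by
  induction l with
  | nil => norm_num [cwNode]
  | cons b l ih => cases b <;> simp only [cwNode] <;> positivity

lemma cwNode_map_not (l : List Bool) : cwNode (l.map not) = (cwNode l)⁻¹ := by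
  induction l with
  | nil => simp [cwNode]
  | cons b l ih =>
    have hx : cwNode l ≠ 0 := (cwNode_pos l).ne'
    cases b <;> simp only [List.map_cons, cwNode, ih, Bool.not_false, Bool.not_true,
      Bool.false_eq_true, ↓reduceIte] <;> field_simp <;> ring

lemma sum_one_fin_bool_pi (n : ℕ) : ∑ _f : Fin n → Bool, (1 : ℚ) = 2 ^ n := by
  simp

lemma sum_cwNode_false_cons (n : ℕ) :
    ∑ f : Fin n → Bool, cwNode (false :: List.ofFn f) = 2 ^ n / 2 := by
  have hpair : ∀ l, cwNode (false :: l) + cwNode (false :: l.map not) = 1 := fun l => by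
    simp only [cwNode, cwNode_map_not, Bool.false_eq_true, ↓reduceIte]
    exact div_add_one_add_inv_div_inv_add_one (cwNode_pos l).ne' (by linarith [cwNode_pos l])
  have htwice : 2 * ∑ f : Fin n → Bool, cwNode (false :: List.ofFn f) = 2 ^ n := by
    calc _ = ∑ f : Fin n → Bool,
            (cwNode (false :: List.ofFn f) + cwNode (false :: (List.ofFn f).map not)) := by
          rw [Finset.sum_add_distrib, sum_ofFn_map_not n (fun l => cwNode (false :: l)), two_mul]
      _ = ∑ _f : Fin n → Bool, 1 := Finset.sum_congr rfl fun f _ => hpair _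
      _ = 2 ^ n := sum_one_fin_bool_pi n
  linarith

lemma S_succ (n : ℕ) : S (n + 1) = S n + 3 * 2 ^ n / 2 := by
  rw [S, sum_ofFn_succ, Finset.sum_add_distrib, sum_cwNode_false_cons]
  simp only [cwNode, ↓reduceIte, Finset.sum_add_distrib, sum_one_fin_bool_pi]
  rw [← S]
  ring

lemma S_eq (n : ℕ) : S n = (3 * 2 ^ n - 1) / 2 := by
  induction n with
  | zero => norm_num [S, cwNode]
  | succ n ih => rw [S_succ, ih]; ring

lemma A_eq (n : ℕ) : A n = 3 / 2 - (1 / 2 : ℝ) ^ n / 2 := by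
  rw [A, S_eq, one_div_pow]
  push_cast
  field_simp

theorem cw_mean_tendsto : Filter.Tendsto A Filter.atTop (nhds (3 / 2)) := by
  have hgeom : Filter.Tendsto (fun n : ℕ => (1 / 2 : ℝ) ^ n) Filter.atTop (nhds 0) :=
    tendsto_pow_atTop_nhds_zero_of_lt_one (by norm_num) (by norm_num)
  simpa [funext A_eq] using tendsto_const_nhds.sub (hgeom.div_const 2)
end

section
/- Let α = [p_0; p_1, …, p_s] and β = [q_0; q_1, …, q_r] be distinct finite continued fractions, and suppose p_i = q_i for all i ≤ k (with k ≤ min(r,s) and s,r > k or the values differ past index k). Then |α − β| ≤ ∏_{j=1}^{k} 1/p_j². -/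
def cf : List ℕ → ℚ
  | [] => 0
  | [q] => q
  | q :: l => q + 1 / cf l

/-!
Prepending a partial quotient `a` acts by `x ↦ a + 1/x`, turning a difference `x - y` into
`(y - x)/(x y)`. Two continued fractions with the same leading quotient `c ≥ 1` both lie in
`[c, c + 1]`, so their difference is at most `1`, and prepending `a` shrinks it by a factor of at
least `c²`. Peeling off the `k` common quotients after `p₀` gives the product bound.
-/

open Finset

theorem Finset.prod_Icc_one_succ {M : Type*} [CommMonoid M] (f : ℕ → M) (k : ℕ) :
    ∏ j ∈ Icc 1 (k + 1), f j = f 1 * ∏ j ∈ Icc 1 k, f (j + 1) := by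
  induction k with
  | zero => simp
  | succ k ih => rw [prod_Icc_succ_top (by omega), ih, prod_Icc_succ_top (by omega), mul_assoc]

theorem cf_cons_cons (a b : ℕ) (t : List ℕ) : cf (a :: b :: t) = a + 1 / cf (b :: t) := rfl

theorem cf_cons_mem_Icc (a : ℕ) {t : List ℕ} (ht : ∀ x ∈ t, 0 < x) :
    cf (a :: t) ∈ Set.Icc (a : ℚ) (a + 1) := by
  induction t generalizing a with
  | nil => simp [cf]
  | cons b t ih =>
    have hb : (1 : ℚ) ≤ cf (b :: t) :=
      le_trans (by exact_mod_cast ht b (by simp)) (ih b fun x hx => ht x (by simp [hx])).1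
    have hinv_pos : 0 < 1 / cf (b :: t) := by positivity
    have hinv_le : 1 / cf (b :: t) ≤ 1 := by rw [div_le_one (by linarith)]; exact hb
    rw [cf_cons_cons]
    constructor <;> linarith

theorem abs_cf_cons_sub_cf_cons_le (a x : ℕ) (hx : 0 < x) {P Q : List ℕ}
    (hP : ∀ y ∈ P, 0 < y) (hQ : ∀ y ∈ Q, 0 < y) :
    |cf (a :: x :: P) - cf (a :: x :: Q)| ≤ |cf (x :: P) - cf (x :: Q)| / (x : ℚ) ^ 2 := by
  obtain ⟨hP₁, -⟩ := cf_cons_mem_Icc x hP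
  obtain ⟨hQ₁, -⟩ := cf_cons_mem_Icc x hQ
  have hx' : (0 : ℚ) < x := by exact_mod_cast hx
  have hPpos : 0 < cf (x :: P) := hx'.trans_le hP₁
  have hQpos : 0 < cf (x :: Q) := hx'.trans_le hQ₁
  have hdiff : cf (a :: x :: P) - cf (a :: x :: Q)
      = (cf (x :: Q) - cf (x :: P)) / (cf (x :: P) * cf (x :: Q)) := by
    rw [cf_cons_cons, cf_cons_cons]; field_simp; ring
  rw [hdiff, abs_div, abs_of_pos (mul_pos hPpos hQpos), abs_sub_comm]
  exact div_le_div_of_nonneg_left (abs_nonneg _) (by positivity)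
    (by rw [sq]; exact mul_le_mul hP₁ hQ₁ hx'.le hPpos.le)

theorem abs_cf_sub_cf_le_prod {k : ℕ} {p q : List ℕ}
    (hp : ∀ x ∈ p.tail, 0 < x) (hq : ∀ x ∈ q.tail, 0 < x)
    (hkp : k < p.length) (hkq : k < q.length) (hagree : ∀ i ≤ k, p.getD i 0 = q.getD i 0) :
    |cf p - cf q| ≤ ∏ j ∈ Icc 1 k, (1 : ℚ) / (p.getD j 0) ^ 2 := by
  obtain ⟨a, P, rfl⟩ := List.exists_cons_of_length_pos (by omega : 0 < p.length)
  obtain ⟨b, Q, rfl⟩ := List.exists_cons_of_length_pos (by omega : 0 < q.length)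
  obtain rfl : a = b := by simpa using hagree 0 (by omega)
  rw [List.tail_cons] at hp hq
  induction k generalizing a P Q with
  | zero =>
    obtain ⟨hP₁, hP₂⟩ := cf_cons_mem_Icc a hp
    obtain ⟨hQ₁, hQ₂⟩ := cf_cons_mem_Icc a hq
    simpa using abs_sub_le_iff.2 ⟨by linarith, by linarith⟩
  | succ k ih =>
    obtain ⟨x, P, rfl⟩ := List.exists_cons_of_length_pos (by simp at hkp; omega : 0 < P.length)
    obtain ⟨y, Q, rfl⟩ := List.exists_cons_of_length_pos (by simp at hkq; omega : 0 < Q.length)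
    obtain rfl : x = y := by simpa using hagree 1 (by omega)
    have hx : 0 < x := hp x (by simp)
    have hP : ∀ z ∈ P, 0 < z := fun z hz => hp z (by simp [hz])
    have hQ : ∀ z ∈ Q, 0 < z := fun z hz => hq z (by simp [hz])
    have htail := ih x P hP (Nat.lt_of_succ_lt_succ hkp) Q hQ (Nat.lt_of_succ_lt_succ hkq)
      fun i hi => by simpa using hagree (i + 1) (by omega)
    calc |cf (a :: x :: P) - cf (a :: x :: Q)|
        ≤ |cf (x :: P) - cf (x :: Q)| / (x : ℚ) ^ 2 := abs_cf_cons_sub_cf_cons_le a x hx hP hQ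
      _ ≤ (∏ j ∈ Icc 1 k, (1 : ℚ) / ((x :: P).getD j 0) ^ 2) / (x : ℚ) ^ 2 := by gcongr
      _ = ∏ j ∈ Icc 1 (k + 1), (1 : ℚ) / ((a :: x :: P).getD j 0) ^ 2 := by
        rw [prod_Icc_one_succ]; simp only [List.getD_cons_succ, List.getD_cons_zero]; ring

theorem List.pos_of_mem_tail {p : List ℕ} (hp : ∀ i, 1 ≤ i → i < p.length → 0 < p.getD i 0) :
    ∀ x ∈ p.tail, 0 < x := by
  intro x hx
  obtain ⟨i, hi, rfl⟩ := List.mem_iff_getElem.mp hx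
  rw [List.length_tail] at hi
  have := hp (i + 1) (by omega) (by omega)
  rwa [List.getD_eq_getElem _ _ (by omega), ← List.getElem_tail] at this

theorem cf_difference_bound_general (p q : List ℕ)
    (hp : ∀ i, 1 ≤ i → i < p.length → 0 < p.getD i 0)
    (hq : ∀ i, 1 ≤ i → i < q.length → 0 < q.getD i 0)
    (k : ℕ) (hkp : k < p.length) (hkq : k < q.length)
    (hagree : ∀ i, i ≤ k → p.getD i 0 = q.getD i 0) :
    |cf p - cf q| ≤ ∏ j ∈ Finset.Icc 1 k, (1 : ℚ) / (p.getD j 0) ^ 2 :=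
  abs_cf_sub_cf_le_prod (List.pos_of_mem_tail hp) (List.pos_of_mem_tail hq) hkp hkq hagree

theorem cf_difference_bound (p q : List ℕ)
    (hp : ∀ i, 1 ≤ i → i < p.length → 0 < p.getD i 0)
    (hq : ∀ i, 1 ≤ i → i < q.length → 0 < q.getD i 0)
    (hne : cf p ≠ cf q)
    (k : ℕ) (hkp : k < p.length) (hkq : k < q.length)
    (hagree : ∀ i, i ≤ k → p.getD i 0 = q.getD i 0) :
    |cf p - cf q| ≤ ∏ j ∈ Finset.Icc 1 k, (1 : ℚ) / (p.getD j 0) ^ 2 :=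
  cf_difference_bound_general p q hp hq k hkp hkq hagree
end

section
/- Let α = [p_0; p_1, …, p_s] and β = [q_0; q_1, …, q_r] be distinct finite continued fractions agreeing in their first k+1 partial quotients, and suppose p_j is divisible by v for even j and divisible by u for odd j (u, v positive integers with uv > 1). Then |α − β| ≤ C · max(u,v) / 2^k for an absolute constant C. -/
lemma cf_cons (a : ℕ) (l : List ℕ) (h : l ≠ []) : cf (a :: l) = a + 1 / cf l := by
  cases l with
  | nil => exact absurd rfl h
  | cons b l' => rfl

lemma cf_bounds : ∀ (l : List ℕ) (a : ℕ), (∀ x ∈ l, 1 ≤ x) →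
    (a : ℚ) ≤ cf (a :: l) ∧ cf (a :: l) ≤ a + 1 := by
  intro l
  induction l with
  | nil => intro a _; simp [cf]
  | cons b l' ih =>
    intro a h
    have hb : 1 ≤ b := h b (by simp)
    have hl' : ∀ x ∈ l', 1 ≤ x := fun x hx => h x (by simp [hx])
    obtain ⟨h1, h2⟩ := ih b hl'
    have hge : (1 : ℚ) ≤ cf (b :: l') := le_trans (by exact_mod_cast hb) h1
    have hpos : (0 : ℚ) < cf (b :: l') := by linarith
    rw [cf_cons a (b :: l') (by simp)]
    constructor
    · have : 0 < 1 / cf (b :: l') := by positivity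
      linarith
    · have : 1 / cf (b :: l') ≤ 1 := by
        rw [div_le_one hpos]; exact hge
      linarith

lemma cfA : ∀ (k : ℕ) (p q : List ℕ),
    (∀ x ∈ p.tail, 1 ≤ x) → (∀ x ∈ q.tail, 1 ≤ x) →
    k < p.length → k < q.length →
    (∀ i, i ≤ k → p.getD i 0 = q.getD i 0) →
    |cf p - cf q| ≤ ∏ j ∈ Finset.range k, ((p.getD (j+1) 0 : ℚ))⁻¹ ^ 2 := by
  intro k
  induction k with
  | zero =>
    intro p q hp hq hkp hkq hagree
    match p, q with
    | a :: p', b :: q' =>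
      have hab : a = b := by simpa using hagree 0 le_rfl
      subst hab
      obtain ⟨h1, h2⟩ := cf_bounds p' a (by simpa using hp)
      obtain ⟨h3, h4⟩ := cf_bounds q' a (by simpa using hq)
      simp only [Finset.range_zero, Finset.prod_empty]
      rw [abs_sub_le_iff]
      constructor <;> linarith
  | succ k ih =>
    intro p q hp hq hkp hkq hagree
    match p, q with
    | a :: p', b :: q' =>
      have hab : a = b := by simpa using hagree 0 (Nat.zero_le _)
      subst hab
      have hp'len : k < p'.length := by simpa using Nat.lt_of_succ_lt_succ hkp
      have hq'len : k < q'.length := by simpa using Nat.lt_of_succ_lt_succ hkq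
      match p', q' with
      | c :: p'', d :: q'' =>
        have hcd : c = d := by simpa using hagree 1 (Nat.one_le_iff_ne_zero.mpr (by simp))
        subst hcd
        have hc : 1 ≤ c := hp c (by simp)
        obtain ⟨hx1, _⟩ := cf_bounds p'' c (fun x hx => hp x (by simp [hx]))
        obtain ⟨hy1, _⟩ := cf_bounds q'' c (fun x hx => hq x (by simp [hx]))
        set x := cf (c :: p'') with hxdef
        set y := cf (c :: q'') with hydef
        have hc1 : (1 : ℚ) ≤ c := by exact_mod_cast hc
        have hxpos : (0 : ℚ) < x := by linarith
        have hypos : (0 : ℚ) < y := by linarith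
        have key : cf (a :: c :: p'') - cf (a :: c :: q'') = 1 / x - 1 / y := by
          rw [cf_cons a (c :: p'') (by simp), cf_cons a (c :: q'') (by simp)]
          ring
        have hdiff : |cf (a :: c :: p'') - cf (a :: c :: q'')|
            = |x - y| / (x * y) := by
          rw [key]
          rw [div_sub_div 1 1 (ne_of_gt hxpos) (ne_of_gt hypos)]
          rw [abs_div]
          rw [abs_of_pos (mul_pos hxpos hypos)]
          congr 1
          rw [one_mul, mul_one, abs_sub_comm]
        have hxy : (c : ℚ) * c ≤ x * y :=
          mul_le_mul hx1 hy1 (by linarith) (by linarith)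
        have hbound : |x - y| / (x * y) ≤ ((c : ℚ))⁻¹ ^ 2 * |x - y| := by
          have hcc : (0:ℚ) < (c:ℚ) * (c:ℚ) := by positivity
          have hstep : |x - y| / (x * y) ≤ |x - y| / ((c:ℚ) * (c:ℚ)) := by
            gcongr
            all_goals first | exact hxy | exact abs_nonneg _ | positivity
          calc |x - y| / (x * y) ≤ |x - y| / ((c:ℚ) * (c:ℚ)) := hstep
            _ = ((c : ℚ))⁻¹ ^ 2 * |x - y| := by
                rw [div_eq_mul_inv, mul_inv]; ring
        have hih := ih (c :: p'') (c :: q'') (fun z hz => hp z (List.mem_cons_of_mem _ hz))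
          (fun z hz => hq z (List.mem_cons_of_mem _ hz)) hp'len hq'len
          (fun i hi => by simpa using hagree (i+1) (Nat.succ_le_succ hi))
        calc |cf (a :: c :: p'') - cf (a :: c :: q'')|
            = |x - y| / (x * y) := hdiff
          _ ≤ ((c : ℚ))⁻¹ ^ 2 * |x - y| := hbound
          _ ≤ ((c : ℚ))⁻¹ ^ 2 * ∏ j ∈ Finset.range k, (((c :: p'').getD (j+1) 0 : ℚ))⁻¹ ^ 2 := by
              apply mul_le_mul_of_nonneg_left hih (by positivity)
          _ = ∏ j ∈ Finset.range (k+1), (((a :: c :: p'').getD (j+1) 0 : ℚ))⁻¹ ^ 2 := by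
              rw [Finset.prod_range_succ']
              simp [mul_comm]

lemma prodB : ∀ (k : ℕ) (f : ℕ → ℚ) (u v : ℚ), 1 ≤ u → 1 ≤ v → 2 ≤ u * v →
    (∀ j, j < k → (if Even j then u else v) ≤ f j) →
    (2 : ℚ) ^ k ≤ 2 * ∏ j ∈ Finset.range k, (f j) ^ 2 := by
  intro k
  induction k using Nat.twoStepInduction with
  | zero => intro f u v hu hv huv h; norm_num
  | one =>
    intro f u v hu hv huv h
    have h0 : u ≤ f 0 := by simpa using h 0 (by norm_num)
    have hf0 : 1 ≤ f 0 := le_trans hu h0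
    simp only [Finset.prod_range_one]
    nlinarith
  | more n ihn _ =>
    intro f u v hu hv huv h
    have hpre : ∀ j, j < n → (if Even j then u else v) ≤ f j :=
      fun j hj => h j (by omega)
    have hmain := ihn f u v hu hv huv hpre
    have hprodpos : 0 < ∏ j ∈ Finset.range n, (f j) ^ 2 := by
      apply Finset.prod_pos
      intro j hj
      have := hpre j (Finset.mem_range.mp hj)
      have : (1 : ℚ) ≤ f j := by
        rcases Nat.even_or_odd j with he | ho
        · simp only [he, if_true] at this; linarith
        · simp only [Nat.not_even_iff_odd.mpr ho, if_false] at this; linarith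
      positivity
    have hab : 2 ≤ f n * f (n + 1) := by
      have h1 := h n (by omega)
      have h2 := h (n+1) (by omega)
      rcases Nat.even_or_odd n with he | ho
      · have hne : ¬ Even (n + 1) := by simp [Nat.even_add_one, he]
        rw [if_pos he] at h1
        rw [if_neg hne] at h2
        nlinarith
      · have hne : Even (n + 1) := by simp [Nat.even_add_one, Nat.not_even_iff_odd.mpr ho]
        rw [if_neg (Nat.not_even_iff_odd.mpr ho)] at h1
        rw [if_pos hne] at h2
        nlinarith
    rw [Finset.prod_range_succ, Finset.prod_range_succ]
    have hsq : 4 ≤ (f n * f (n+1)) ^ 2 := by nlinarith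
    have h2n : (0:ℚ) < 2 ^ n := by positivity
    calc (2:ℚ) ^ (n + 2) = 2 ^ n * 4 := by ring
      _ ≤ (2 * ∏ j ∈ Finset.range n, (f j) ^ 2) * 4 := by nlinarith
      _ ≤ (2 * ∏ j ∈ Finset.range n, (f j) ^ 2) * ((f n * f (n+1)) ^ 2) := by nlinarith
      _ = 2 * ((∏ j ∈ Finset.range n, (f j) ^ 2) * f n ^ 2 * f (n+1) ^ 2) := by ring

theorem cf_difference_bound_uv :
    ∃ C : ℚ, 0 < C ∧ ∀ (u v : ℕ), 0 < u → 0 < v → 1 < u * v →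
      ∀ (p q : List ℕ),
        (∀ i, 1 ≤ i → i < p.length → 0 < p.getD i 0) →
        (∀ i, 1 ≤ i → i < q.length → 0 < q.getD i 0) →
        cf p ≠ cf q →
        ∀ k : ℕ, k < p.length → k < q.length →
          (∀ i, i ≤ k → p.getD i 0 = q.getD i 0) →
          (∀ j, j ≤ k → Even j → v ∣ p.getD j 0) →
          (∀ j, j ≤ k → Odd j → u ∣ p.getD j 0) →
          |cf p - cf q| ≤ C * (max u v : ℚ) / 2 ^ k := by
  refine ⟨2, by norm_num, ?_⟩
  intro u v hu hv huv p q hp hq hne k hkp hkq hagree hdve hdvo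
  -- tail positivity
  have hptail : ∀ x ∈ p.tail, 1 ≤ x := by
    intro x hx
    obtain ⟨i, hi, hget⟩ := List.mem_iff_getElem.mp hx
    have hlen : i + 1 < p.length := by
      have := p.length_tail ▸ hi; omega
    have : p.getD (i+1) 0 = x := by
      rw [List.getD_eq_getElem p 0 hlen]
      rw [← hget, List.getElem_tail]
    have := hp (i+1) (by omega) hlen
    omega
  have hqtail : ∀ x ∈ q.tail, 1 ≤ x := by
    intro x hx
    obtain ⟨i, hi, hget⟩ := List.mem_iff_getElem.mp hx
    have hlen : i + 1 < q.length := by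
      have := q.length_tail ▸ hi; omega
    have : q.getD (i+1) 0 = x := by
      rw [List.getD_eq_getElem q 0 hlen]
      rw [← hget, List.getElem_tail]
    have := hq (i+1) (by omega) hlen
    omega
  have habs := cfA k p q hptail hqtail hkp hkq hagree
  -- the product bound
  set f : ℕ → ℚ := fun j => ((p.getD (j+1) 0 : ℕ) : ℚ) with hf
  have hfb : ∀ j, j < k → (if Even j then (u:ℚ) else (v:ℚ)) ≤ f j := by
    intro j hj
    have hlen : j + 1 < p.length := by omega
    have hpos : 0 < p.getD (j+1) 0 := hp (j+1) (by omega) hlen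
    rcases Nat.even_or_odd j with he | ho
    · have hodd : Odd (j+1) := Even.add_one he
      have hdvd := hdvo (j+1) (by omega) hodd
      have := Nat.le_of_dvd hpos hdvd
      simp only [if_pos he, hf]
      exact_mod_cast this
    · have heven : Even (j+1) := Odd.add_one ho
      have hdvd := hdve (j+1) (by omega) heven
      have := Nat.le_of_dvd hpos hdvd
      simp only [if_neg (Nat.not_even_iff_odd.mpr ho), hf]
      exact_mod_cast this
  have hu1 : (1:ℚ) ≤ u := by exact_mod_cast hu
  have hv1 : (1:ℚ) ≤ v := by exact_mod_cast hv
  have huv2 : (2:ℚ) ≤ (u:ℚ) * (v:ℚ) := by exact_mod_cast huv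
  have hB := prodB k f u v hu1 hv1 huv2 hfb
  have hprodpos : 0 < ∏ j ∈ Finset.range k, (f j) ^ 2 := by
    apply Finset.prod_pos
    intro j hj
    have := hfb j (Finset.mem_range.mp hj)
    have : (1:ℚ) ≤ f j := by
      rcases Nat.even_or_odd j with he | ho
      · simp only [if_pos he] at this; linarith
      · simp only [if_neg (Nat.not_even_iff_odd.mpr ho)] at this; linarith
    positivity
  have hrw : (∏ j ∈ Finset.range k, ((p.getD (j+1) 0 : ℚ))⁻¹ ^ 2)
      = (∏ j ∈ Finset.range k, (f j) ^ 2)⁻¹ := by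
    rw [← Finset.prod_inv_distrib]
    apply Finset.prod_congr rfl
    intro j _
    rw [← inv_pow]
  rw [hrw] at habs
  have h2k : (0:ℚ) < 2 ^ k := by positivity
  have hstep : (∏ j ∈ Finset.range k, (f j) ^ 2)⁻¹ ≤ 2 / 2 ^ k := by
    have h1 : (2:ℚ) ^ k / 2 ≤ ∏ j ∈ Finset.range k, (f j) ^ 2 := by linarith
    have h2 : (∏ j ∈ Finset.range k, (f j) ^ 2)⁻¹ ≤ ((2:ℚ) ^ k / 2)⁻¹ :=
      inv_anti₀ (by positivity) h1
    calc (∏ j ∈ Finset.range k, (f j) ^ 2)⁻¹ ≤ ((2:ℚ) ^ k / 2)⁻¹ := h2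
      _ = 2 / 2 ^ k := by rw [inv_div]
  have hmax : (1:ℚ) ≤ (max u v : ℚ) := by
    have : (1:ℕ) ≤ max u v := le_trans hu (le_max_left _ _)
    exact_mod_cast this
  calc |cf p - cf q| ≤ (∏ j ∈ Finset.range k, (f j) ^ 2)⁻¹ := habs
    _ ≤ 2 / 2 ^ k := hstep
    _ ≤ 2 * (max u v : ℚ) / 2 ^ k := by
        rw [div_le_div_iff₀ h2k h2k]
        nlinarith
end
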